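/- arXiv:2402.04785 — 7 statements merged into one kernel-verified Lean document; each statement's English description precedes it below -/
import Mathlib

section
/- Let h_1 ≤ ... ≤ h_n be nonnegative reals with h_1 > 0 and let a ≥ 0. Define g(j) = h_j + a(Σ_{i=1}^j 1/h_i)^{-1} and p(j) = (j + a)(Σ_{i=1}^j 1/h_i)^{-1}. Then (1/2) min_{j∈[n]} g(j) ≤ min_{j∈[n]} p(j) ≤ min_{j∈[n]} g(j). -/
/-!
Write `S j = ∑_{i ≤ j} 1 / h i` and `T = p j = (j + a) / S j`. Since `h` is nondecreasing,
`S j ≥ j / h j`, which gives `p j ≤ g j`. Conversely, let `k` be the largest index `≤ j`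
with `h k ≤ T` (the smallest `h i` qualifies). The indices `≤ j` with `h i > T` contribute
at most `j / T` to `S j = (j + a) / T`, so `S k ≥ a / T`; hence `g k = h k + a / S k ≤ 2 T`.
-/

open Finset

section SumInv

variable {α : Type*} {s : Finset α} {f : α → ℝ} {c : ℝ}

theorem mul_sum_inv_le_card (hc : 0 ≤ c) (hf : ∀ i ∈ s, c ≤ f i) :
    c * ∑ i ∈ s, (f i)⁻¹ ≤ #s := by
  rw [mul_sum]
  simpa using sum_le_card_nsmul s _ 1 fun i hi =>
    mul_inv_le_one_of_le₀ (hf i hi) (hc.trans (hf i hi))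

theorem card_le_mul_sum_inv (hf : ∀ i ∈ s, 0 < f i) (hc : ∀ i ∈ s, f i ≤ c) :
    (#s : ℝ) ≤ c * ∑ i ∈ s, (f i)⁻¹ := by
  rw [mul_sum]
  simpa using card_nsmul_le_sum s _ 1 fun i hi =>
    (le_mul_inv_iff₀ (hf i hi)).2 (by simpa using hc i hi)

theorem mul_sum_inv_le_card_add_mul_sum_inv_filter (hc : 0 ≤ c) :
    c * ∑ i ∈ s, (f i)⁻¹ ≤ #s + c * ∑ i ∈ s with f i ≤ c, (f i)⁻¹ := by
  rw [← sum_filter_add_sum_filter_not s (f · ≤ c), mul_add, add_comm]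
  gcongr
  calc c * ∑ i ∈ s with ¬f i ≤ c, (f i)⁻¹
      ≤ #(s.filter (¬f · ≤ c)) :=
        mul_sum_inv_le_card hc fun i hi => (not_le.1 (mem_filter.1 hi).2).le
    _ ≤ #s := by exact_mod_cast card_filter_le _ _

end SumInv

section PrefixSum

variable {ι : Type*} [LinearOrder ι] [LocallyFiniteOrderBot ι] {h : ι → ℝ} {a : ℝ}

theorem sum_Iic_inv_pos (hpos : ∀ i, 0 < h i) (j : ι) : 0 < ∑ i ∈ Iic j, (h i)⁻¹ :=
  sum_pos (fun i _ => inv_pos.2 (hpos i)) ⟨j, mem_Iic.2 le_rfl⟩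

theorem card_Iic_add_mul_inv_sum_le (hpos : ∀ i, 0 < h i) (hmono : Monotone h) (j : ι) :
    (#(Iic j) + a) * (∑ i ∈ Iic j, (h i)⁻¹)⁻¹ ≤ h j + a * (∑ i ∈ Iic j, (h i)⁻¹)⁻¹ := by
  have hcard : (#(Iic j) : ℝ) ≤ h j * ∑ i ∈ Iic j, (h i)⁻¹ :=
    card_le_mul_sum_inv (fun i _ => hpos i) fun i hi => hmono (mem_Iic.1 hi)
  rw [add_mul, add_le_add_iff_right, mul_inv_le_iff₀ (sum_Iic_inv_pos hpos j)]
  exact hcard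

theorem exists_add_mul_inv_sum_le_two_mul (hpos : ∀ i, 0 < h i) (ha : 0 ≤ a) (j : ι) :
    ∃ k, h k + a * (∑ i ∈ Iic k, (h i)⁻¹)⁻¹ ≤
      2 * ((#(Iic j) + a) * (∑ i ∈ Iic j, (h i)⁻¹)⁻¹) := by
  set S := ∑ i ∈ Iic j, (h i)⁻¹
  set T := (#(Iic j) + a) * S⁻¹
  have hS : 0 < S := sum_Iic_inv_pos hpos j
  have hTS : T * S = #(Iic j) + a := by simp only [T, mul_assoc, inv_mul_cancel₀ hS.ne', mul_one]
  have hT : 0 ≤ T := by positivity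
  set A := (Iic j).filter (h · ≤ T)
  have hA : A.Nonempty := by
    obtain ⟨i, hi, hmin⟩ := (Iic j).exists_min_image h ⟨j, mem_Iic.2 le_rfl⟩
    refine ⟨i, mem_filter.2 ⟨hi, ?_⟩⟩
    have : h i * S ≤ #(Iic j) := mul_sum_inv_le_card (hpos i).le hmin
    rw [← mul_le_mul_iff_left₀ hS, hTS]
    linarith
  set k := A.max' hA
  have hAk : ∑ i ∈ A, (h i)⁻¹ ≤ ∑ i ∈ Iic k, (h i)⁻¹ :=
    sum_le_sum_of_subset_of_nonneg (fun i hi => mem_Iic.2 (A.le_max' i hi))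
      fun i _ _ => (inv_pos.2 (hpos i)).le
  have haA : a ≤ T * ∑ i ∈ A, (h i)⁻¹ := by
    have := mul_sum_inv_le_card_add_mul_sum_inv_filter (s := Iic j) (f := h) hT
    linarith
  have hhk : h k ≤ T := (mem_filter.1 (A.max'_mem hA)).2
  have hak : a * (∑ i ∈ Iic k, (h i)⁻¹)⁻¹ ≤ T := by
    rw [mul_inv_le_iff₀ (sum_Iic_inv_pos hpos k)]
    exact haA.trans (mul_le_mul_of_nonneg_left hAk hT)
  exact ⟨k, by linarith⟩

end PrefixSum

theorem min_g_le_min_p_le_min_g (n : ℕ) (hn : 0 < n) (h : Fin n → ℝ)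
    (hpos : ∀ i, 0 < h i) (hsort : Monotone h) (a : ℝ) (ha : 0 ≤ a) :
    (1 / 2) * (⨅ j : Fin n, (h j + a * (∑ i ∈ Finset.Iic j, (h i)⁻¹)⁻¹)) ≤
      (⨅ j : Fin n, (((j.1 : ℝ) + 1 + a) * (∑ i ∈ Finset.Iic j, (h i)⁻¹)⁻¹)) ∧
    (⨅ j : Fin n, (((j.1 : ℝ) + 1 + a) * (∑ i ∈ Finset.Iic j, (h i)⁻¹)⁻¹)) ≤
      (⨅ j : Fin n, (h j + a * (∑ i ∈ Finset.Iic j, (h i)⁻¹)⁻¹)) := by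
  have : Nonempty (Fin n) := ⟨⟨0, hn⟩⟩
  have hcard (j : Fin n) : (j.1 : ℝ) + 1 = #(Iic j) := by simp [Fin.card_Iic]
  constructor
  · refine le_ciInf fun j => ?_
    obtain ⟨k, hk⟩ := exists_add_mul_inv_sum_le_two_mul hpos ha j
    have := ciInf_le (Finite.bddBelow_range fun j => h j + a * (∑ i ∈ Iic j, (h i)⁻¹)⁻¹) k
    rw [hcard]
    linarith
  · refine ciInf_mono (Finite.bddBelow_range _) fun j => ?_
    rw [hcard]
    exact card_Iic_add_mul_inv_sum_le hpos hsort j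
end

section
/- The equilibrium time is monotone: if ω̄ ≥ ω ≥ 0, σ̄²/ε̄ ≥ σ²/ε ≥ 0, and h̄_i ≥ h_i ≥ 0, τ̄_i ≥ τ_i ≥ 0 for all i ∈ [n], then t*(ω̄, σ̄²/ε̄, [h̄_i, τ̄_i]) ≥ t*(ω, σ²/ε, [h_i, τ_i]). -/
/-!
Fix a barred position `j`, put `t = max (max h̄ τ̄) (π̄ j) ⊔ s̄ j`, and let `k` be the last
position, in the order `π`, of the pairs `π̄ 0, …, π̄ j`. These pairs are sorted and dominate
their unbarred versions, so `max h τ (π k) ≤ t`. Each term of the defining sums is antitone in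
`ω, r, h, τ` and monotone in `s`, and the unbarred prefix up to `k` contains all those pairs, so
`s̄ j⁻¹ ≤ F t` for the unbarred prefix sum `F` up to `k`. Since `F` is monotone and
`(F (s k))⁻¹ = s k`, this forces `s k ≤ t`: the `k`-th term of `t*` is at most the barred `j`-th.
-/

open Finset
open scoped ENNReal

/-- The pairs `(h i, τ i)`, reindexed via the permutation `π`, are sorted
in nondecreasing order of `max (h i) (τ i)`. -/
def SortsPairs {n : ℕ} (h τ : Fin n → ℝ≥0∞) (π : Equiv.Perm (Fin n)) : Prop :=
  Monotone fun i => max (h (π i)) (τ (π i))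

/-- `s` solves the defining equation of the equilibrium time for the prefix `{0, …, j}`:
`(∑_{i ≤ j} (2 τ_{π i} ω + 4 τ_{π i} h_{π i} r ω / s + 2 h_{π i} r)⁻¹)⁻¹ = s`,
where `r = σ²/ε` and arithmetic is in `ℝ≥0∞` (so `1/0 = ∞`). -/
def SolvesEquil {n : ℕ} (w r : ℝ≥0∞) (h τ : Fin n → ℝ≥0∞)
    (π : Equiv.Perm (Fin n)) (j : Fin n) (s : ℝ≥0∞) : Prop :=
  (∑ i ∈ Finset.Iic j,
      (2 * τ (π i) * w + 4 * τ (π i) * h (π i) * r * w / s + 2 * h (π i) * r)⁻¹)⁻¹ = s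

/-- The value `min_j max{max{h_{π j}, τ_{π j}}, s j}` of the equilibrium time,
given the sorting permutation `π` and the solutions `s j` of the defining equations. -/
noncomputable def tstarVal {n : ℕ} (h τ : Fin n → ℝ≥0∞) (π : Equiv.Perm (Fin n))
    (s : Fin n → ℝ≥0∞) : ℝ≥0∞ :=
  ⨅ j, max (max (h (π j)) (τ (π j))) (s j)

noncomputable def equilRate (w r h τ s : ℝ≥0∞) : ℝ≥0∞ :=
  (2 * τ * w + 4 * τ * h * r * w / s + 2 * h * r)⁻¹

theorem equilRate_le_equilRate {w w' r r' h h' τ τ' s s' : ℝ≥0∞}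
    (hw : w ≤ w') (hr : r ≤ r') (hh : h ≤ h') (hτ : τ ≤ τ') (hs : s' ≤ s) :
    equilRate w' r' h' τ' s' ≤ equilRate w r h τ s := by
  unfold equilRate
  gcongr

theorem solvesEquil_iff {n : ℕ} {w r : ℝ≥0∞} {h τ : Fin n → ℝ≥0∞} {π : Equiv.Perm (Fin n)}
    {j : Fin n} {s : ℝ≥0∞} :
    SolvesEquil w r h τ π j s ↔ (∑ i ∈ Iic j, equilRate w r (h (π i)) (τ (π i)) s)⁻¹ = s :=
  Iff.rfl

theorem monotone_sum_equilRate {ι : Type*} (w r : ℝ≥0∞) (h τ : ι → ℝ≥0∞) (I : Finset ι) :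
    Monotone fun s => ∑ i ∈ I, equilRate w r (h i) (τ i) s :=
  fun _ _ hst => sum_le_sum fun _ _ => equilRate_le_equilRate le_rfl le_rfl le_rfl le_rfl hst

theorem ENNReal.le_of_inv_apply_eq_self {F : ℝ≥0∞ → ℝ≥0∞} (hF : Monotone F) {s t : ℝ≥0∞}
    (hs : (F s)⁻¹ = s) (ht : (F t)⁻¹ ≤ t) : s ≤ t := by
  rcases le_total s t with hst | hts
  · exact hst
  · calc s = (F s)⁻¹ := hs.symm
      _ ≤ (F t)⁻¹ := ENNReal.inv_le_inv.mpr (hF hts)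
      _ ≤ t := ht

section

variable {n : ℕ} {w wb r rb : ℝ≥0∞} {h τ hb τb : Fin n → ℝ≥0∞} {π πb : Equiv.Perm (Fin n)}

theorem inv_le_sum_equilRate_Iic {j k : Fin n} {sb t : ℝ≥0∞}
    (hw : w ≤ wb) (hr : r ≤ rb) (hh : ∀ i, h i ≤ hb i) (hτ : ∀ i, τ i ≤ τb i)
    (hsb : SolvesEquil wb rb hb τb πb j sb) (hsbt : sb ≤ t)
    (hk : ∀ i ≤ j, π.symm (πb i) ≤ k) :
    sb⁻¹ ≤ ∑ m ∈ Iic k, equilRate w r (h (π m)) (τ (π m)) t := by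
  let e : Fin n ↪ Fin n := (πb.trans π.symm).toEmbedding
  have hsub : (Iic j).map e ⊆ Iic k := fun m hm => by
    obtain ⟨i, hi, rfl⟩ := mem_map.mp hm
    exact mem_Iic.mpr (hk i (mem_Iic.mp hi))
  rw [← solvesEquil_iff.mp hsb, inv_inv]
  calc ∑ i ∈ Iic j, equilRate wb rb (hb (πb i)) (τb (πb i)) sb
      ≤ ∑ i ∈ Iic j, equilRate w r (h (πb i)) (τ (πb i)) t :=
        sum_le_sum fun i _ => equilRate_le_equilRate hw hr (hh _) (hτ _) hsbt
    _ = ∑ m ∈ (Iic j).map e, equilRate w r (h (π m)) (τ (π m)) t := by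
        simp [e, sum_map]
    _ ≤ ∑ m ∈ Iic k, equilRate w r (h (π m)) (τ (π m)) t := sum_le_sum_of_subset hsub

theorem exists_max_le_of_solvesEquil
    (hw : w ≤ wb) (hr : r ≤ rb) (hh : ∀ i, h i ≤ hb i) (hτ : ∀ i, τ i ≤ τb i)
    (hπb : SortsPairs hb τb πb) {s sb : Fin n → ℝ≥0∞}
    (hs : ∀ j, SolvesEquil w r h τ π j (s j))
    (hsb : ∀ j, SolvesEquil wb rb hb τb πb j (sb j)) (j : Fin n) :
    ∃ k, max (max (h (π k)) (τ (π k))) (s k) ≤ max (max (hb (πb j)) (τb (πb j))) (sb j) := by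
  set t := max (max (hb (πb j)) (τb (πb j))) (sb j)
  obtain ⟨i₀, hi₀, hk⟩ :=
    exists_max_image (Iic j) (fun i => π.symm (πb i)) ⟨j, mem_Iic.mpr le_rfl⟩
  refine ⟨π.symm (πb i₀), max_le ?_ ?_⟩
  · rw [Equiv.apply_symm_apply]
    calc max (h (πb i₀)) (τ (πb i₀)) ≤ max (hb (πb i₀)) (τb (πb i₀)) :=
          max_le_max (hh _) (hτ _)
      _ ≤ max (hb (πb j)) (τb (πb j)) := hπb (mem_Iic.mp hi₀)
      _ ≤ t := le_max_left _ _
  · have hsum := inv_le_sum_equilRate_Iic (π := π) hw hr hh hτ (hsb j)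
      (le_max_right _ _ : sb j ≤ t) fun i hi => hk i (mem_Iic.mpr hi)
    refine ENNReal.le_of_inv_apply_eq_self
      (monotone_sum_equilRate w r (h ∘ π) (τ ∘ π) (Iic (π.symm (πb i₀))))
      (solvesEquil_iff.mp (hs _)) ?_
    calc _ ≤ (sb j)⁻¹⁻¹ := ENNReal.inv_le_inv.mpr hsum
      _ = sb j := inv_inv _
      _ ≤ t := le_max_right _ _

end

theorem equilibrium_time_monotone_general (n : ℕ)
    (w wb r rb : ℝ≥0∞) (h τ hb τb : Fin n → ℝ≥0∞)
    (hw : w ≤ wb) (hr : r ≤ rb) (hh : ∀ i, h i ≤ hb i) (hτ : ∀ i, τ i ≤ τb i)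
    (π πb : Equiv.Perm (Fin n))
    (hπb : SortsPairs hb τb πb)
    (s sb : Fin n → ℝ≥0∞)
    (hs : ∀ j, SolvesEquil w r h τ π j (s j))
    (hsb : ∀ j, SolvesEquil wb rb hb τb πb j (sb j)) :
    tstarVal h τ π s ≤ tstarVal hb τb πb sb :=
  le_iInf fun j =>
    let ⟨k, hk⟩ := exists_max_le_of_solvesEquil hw hr hh hτ hπb hs hsb j
    iInf_le_of_le k hk

/-- Monotonicity of the equilibrium time in all of its arguments. -/
theorem equilibrium_time_monotone (n : ℕ) (hn : 0 < n)
    (w wb r rb : ℝ≥0∞) (h τ hb τb : Fin n → ℝ≥0∞)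
    (hw : w ≤ wb) (hr : r ≤ rb) (hh : ∀ i, h i ≤ hb i) (hτ : ∀ i, τ i ≤ τb i)
    (π πb : Equiv.Perm (Fin n))
    (hπ : SortsPairs h τ π) (hπb : SortsPairs hb τb πb)
    (s sb : Fin n → ℝ≥0∞)
    (hs : ∀ j, SolvesEquil w r h τ π j (s j))
    (hsb : ∀ j, SolvesEquil wb rb hb τb πb j (sb j)) :
    tstarVal h τ π s ≤ tstarVal hb τb πb sb :=
  equilibrium_time_monotone_general n w wb r rb h τ hb τb hw hr hh hτ π πb hπb s sb hs hsb
end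

section
/- For all c ∈ (0,1], scaling both the variance parameter ω and the noise ratio σ²/ε by c scales the equilibrium time down by at most c: t*(cω, c·σ²/ε, [h_i, τ_i]) ≥ c · t*(ω, σ²/ε, [h_i, τ_i]). -/
open Finset
open scoped ENNReal

/-!
Scaling `ω` and `σ²/ε` by `c` scales every root of the defining equation by exactly `c`:
the right-hand side is an antitone function of `s`, so each equation has at most one root,
and `c * s j` solves the scaled equation because each summand scales homogeneously.
Then `c * max a (s j) ≤ max a (c * s j)` for `c ≤ 1`, and taking the infimum over `j`
gives the bound.
-/

theorem Function.IsFixedPt.eq_of_antitone {α : Type*} [LinearOrder α] {f : α → α}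
    (hf : Antitone f) {a b : α} (ha : Function.IsFixedPt f a) (hb : Function.IsFixedPt f b) :
    a = b := by
  rcases le_total a b with hab | hba
  · exact le_antisymm hab (hb ▸ ha ▸ hf hab)
  · exact le_antisymm (ha ▸ hb ▸ hf hba) hba

section

variable {n : ℕ} (w r : ℝ≥0∞) (h τ : Fin n → ℝ≥0∞) (π : Equiv.Perm (Fin n)) (j : Fin n)

noncomputable def equilMap (s : ℝ≥0∞) : ℝ≥0∞ :=
  (∑ i ∈ Iic j,
      (2 * τ (π i) * w + 4 * τ (π i) * h (π i) * r * w / s + 2 * h (π i) * r)⁻¹)⁻¹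

theorem solvesEquil_iff_isFixedPt {s : ℝ≥0∞} :
    SolvesEquil w r h τ π j s ↔ Function.IsFixedPt (equilMap w r h τ π j) s :=
  Iff.rfl

theorem equilMap_antitone : Antitone (equilMap w r h τ π j) := by
  intro s t hst
  refine ENNReal.inv_le_inv.mpr (sum_le_sum fun i _ => ENNReal.inv_le_inv.mpr ?_)
  gcongr

theorem equilMap_mul {c : ℝ≥0∞} (hc0 : c ≠ 0) (hc : c ≠ ∞) (s : ℝ≥0∞) :
    equilMap (c * w) (c * r) h τ π j (c * s) = c * equilMap w r h τ π j s := by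
  have hterm : ∀ i : Fin n,
      2 * τ (π i) * (c * w) + 4 * τ (π i) * h (π i) * (c * r) * (c * w) / (c * s)
        + 2 * h (π i) * (c * r)
      = c * (2 * τ (π i) * w + 4 * τ (π i) * h (π i) * r * w / s + 2 * h (π i) * r) := by
    intro i
    have hquot : 4 * τ (π i) * h (π i) * (c * r) * (c * w) / (c * s)
        = c * (4 * τ (π i) * h (π i) * r * w / s) := by
      rw [show 4 * τ (π i) * h (π i) * (c * r) * (c * w)
          = c * (c * (4 * τ (π i) * h (π i) * r * w)) by ring,
        ENNReal.mul_div_mul_left _ _ hc0 hc, mul_div_assoc]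
    rw [hquot]
    ring
  simp only [equilMap, hterm, ENNReal.mul_inv (.inl hc0) (.inl hc), ← mul_sum]
  rw [ENNReal.mul_inv (.inl (ENNReal.inv_ne_zero.mpr hc)) (.inl (ENNReal.inv_ne_top.mpr hc0)),
    inv_inv]

variable {w r h τ π j}

theorem SolvesEquil.eq {s t : ℝ≥0∞} (hs : SolvesEquil w r h τ π j s)
    (ht : SolvesEquil w r h τ π j t) : s = t :=
  Function.IsFixedPt.eq_of_antitone (equilMap_antitone w r h τ π j) hs ht

theorem SolvesEquil.mul {c s : ℝ≥0∞} (hc0 : c ≠ 0) (hc : c ≠ ∞)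
    (hs : SolvesEquil w r h τ π j s) : SolvesEquil (c * w) (c * r) h τ π j (c * s) := by
  rw [solvesEquil_iff_isFixedPt] at hs ⊢
  rw [Function.IsFixedPt, equilMap_mul w r h τ π j hc0 hc, hs]

end

theorem ENNReal.mul_max_le_max_mul {c : ℝ≥0∞} (hc : c ≤ 1) (a b : ℝ≥0∞) :
    c * max a b ≤ max a (c * b) := by
  rw [mul_max]
  exact max_le_max_right _ (mul_le_of_le_one_left' hc)

theorem mul_tstarVal_le {n : ℕ} {c : ℝ≥0∞} (hc : c ≤ 1) (h τ : Fin n → ℝ≥0∞)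
    (π : Equiv.Perm (Fin n)) (s : Fin n → ℝ≥0∞) :
    c * tstarVal h τ π s ≤ tstarVal h τ π (fun j => c * s j) :=
  le_iInf fun j => (mul_le_mul_right (iInf_le _ j) c).trans (ENNReal.mul_max_le_max_mul hc _ _)

theorem equilibrium_time_scale_lower_general (n : ℕ)
    (c w r : ℝ≥0∞) (hc0 : 0 < c) (hc1 : c ≤ 1)
    (h τ : Fin n → ℝ≥0∞) (π : Equiv.Perm (Fin n))
    (s sc : Fin n → ℝ≥0∞)
    (hs : ∀ j, SolvesEquil w r h τ π j (s j))
    (hsc : ∀ j, SolvesEquil (c * w) (c * r) h τ π j (sc j)) :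
    c * tstarVal h τ π s ≤ tstarVal h τ π sc := by
  have hc : c ≠ ∞ := (hc1.trans_lt ENNReal.one_lt_top).ne
  have hscale : sc = fun j => c * s j :=
    funext fun j => (hsc j).eq ((hs j).mul hc0.ne' hc)
  exact hscale ▸ mul_tstarVal_le hc1 h τ π s

/-- For `c ∈ (0,1]`, `t*(cω, c·σ²/ε, [h_i, τ_i]) ≥ c · t*(ω, σ²/ε, [h_i, τ_i])`. -/
theorem equilibrium_time_scale_lower (n : ℕ) (hn : 0 < n)
    (c w r : ℝ≥0∞) (hc0 : 0 < c) (hc1 : c ≤ 1)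
    (h τ : Fin n → ℝ≥0∞) (π : Equiv.Perm (Fin n)) (hπ : SortsPairs h τ π)
    (s sc : Fin n → ℝ≥0∞)
    (hs : ∀ j, SolvesEquil w r h τ π j (s j))
    (hsc : ∀ j, SolvesEquil (c * w) (c * r) h τ π j (sc j)) :
    c * tstarVal h τ π s ≤ tstarVal h τ π sc :=
  equilibrium_time_scale_lower_general n c w r hc0 hc1 h τ π s sc hs hsc
end

section
/- Restricting the set of workers can only increase the equilibrium time: for any nonempty subset S = {k_1, ..., k_m} of [n], t*(ω, σ²/ε, [h_i, τ_i]_{i=1}^n) ≤ t*(ω, σ²/ε, [h_{k_i}, τ_{k_i}]_{i=1}^m). -/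
/-!
Let `Φ(t) = ∑_{i : max(h_i, τ_i) ≤ t} (2 τ_i ω + 4 τ_i h_i r ω / t + 2 h_i r)⁻¹`. Adding workers
can only increase `Φ`. Every candidate `t = max(max(h_{π j}, τ_{π j}), s_j)` satisfies
`t⁻¹ ≤ Φ(t)`: by sortedness every worker of the prefix `{π 0, …, π j}` is admitted at time `t`,
and the summands increase with `t`. Conversely `t⁻¹ ≤ Φ(t)` forces `t* ≤ t`: with `j` the last admitted index in sorted
order, `t < s_j` would give `s_j⁻¹ ≥ Φ(t) ≥ t⁻¹`. So each candidate for the subset also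
satisfies `t⁻¹ ≤ Φ(t)` for the full set of workers, and bounds its equilibrium time.
-/

open Finset
open scoped ENNReal

noncomputable def equilTerm (w r h τ t : ℝ≥0∞) : ℝ≥0∞ :=
  (2 * τ * w + 4 * τ * h * r * w / t + 2 * h * r)⁻¹

lemma equilTerm_monotone (w r h τ : ℝ≥0∞) : Monotone (equilTerm w r h τ) := by
  intro a b hab
  unfold equilTerm
  gcongr

lemma SolvesEquil.sum_equilTerm_eq {n : ℕ} {w r : ℝ≥0∞} {h τ : Fin n → ℝ≥0∞}
    {π : Equiv.Perm (Fin n)} {j : Fin n} {s : ℝ≥0∞} (hs : SolvesEquil w r h τ π j s) :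
    ∑ i ∈ Iic j, equilTerm w r (h (π i)) (τ (π i)) s = s⁻¹ :=
  (inv_inv _).symm.trans (congrArg Inv.inv hs)

section EquilMass

variable {ι κ : Type*} [Fintype ι] [Fintype κ] (w r : ℝ≥0∞) (h τ : ι → ℝ≥0∞)

noncomputable def equilMass (t : ℝ≥0∞) : ℝ≥0∞ :=
  ∑ i ∈ univ.filter (fun i => max (h i) (τ i) ≤ t), equilTerm w r (h i) (τ i) t

variable {w r h τ}

lemma sum_equilTerm_le_equilMass {S : Finset ι} {t : ℝ≥0∞}
    (hS : ∀ i ∈ S, max (h i) (τ i) ≤ t) :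
    ∑ i ∈ S, equilTerm w r (h i) (τ i) t ≤ equilMass w r h τ t :=
  sum_le_sum_of_subset fun i hi => mem_filter.2 ⟨mem_univ i, hS i hi⟩

lemma equilMass_le_sum_equilTerm {S : Finset ι} {t : ℝ≥0∞}
    (hS : ∀ i, max (h i) (τ i) ≤ t → i ∈ S) :
    equilMass w r h τ t ≤ ∑ i ∈ S, equilTerm w r (h i) (τ i) t :=
  sum_le_sum_of_subset fun i hi => hS i (mem_filter.1 hi).2

lemma equilMass_comp_le_of_injective {k : κ → ι} (hk : Function.Injective k) (t : ℝ≥0∞) :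
    equilMass w r (h ∘ k) (τ ∘ k) t ≤ equilMass w r h τ t := by
  classical
  refine (sum_image fun a _ b _ hab => hk hab).symm.trans_le
    (sum_equilTerm_le_equilMass fun i hi => ?_)
  obtain ⟨a, ha, rfl⟩ := mem_image.1 hi
  exact (mem_filter.1 ha).2

lemma equilMass_comp_equiv (π : Equiv.Perm ι) (t : ℝ≥0∞) :
    equilMass w r (h ∘ π) (τ ∘ π) t = equilMass w r h τ t := by
  simp only [equilMass, sum_filter, Function.comp_apply]
  exact Equiv.sum_comp π (fun i => if max (h i) (τ i) ≤ t then equilTerm w r (h i) (τ i) t else 0)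

lemma eq_top_of_inv_le_equilMass {t : ℝ≥0∞} (ht : t⁻¹ ≤ equilMass w r h τ t)
    (hempty : ∀ i, t < max (h i) (τ i)) : t = ⊤ := by
  have hmass : equilMass w r h τ t = 0 :=
    sum_eq_zero fun i hi => absurd (mem_filter.1 hi).2 (hempty i).not_ge
  exact ENNReal.inv_eq_zero.1 (le_zero_iff.1 (hmass ▸ ht))

end EquilMass

lemma inv_le_equilMass_of_solvesEquil {n : ℕ} {w r : ℝ≥0∞} {h τ : Fin n → ℝ≥0∞}
    {π : Equiv.Perm (Fin n)} (hπ : SortsPairs h τ π) {j : Fin n} {s : ℝ≥0∞}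
    (hs : SolvesEquil w r h τ π j s) :
    (max (max (h (π j)) (τ (π j))) s)⁻¹ ≤
      equilMass w r h τ (max (max (h (π j)) (τ (π j))) s) := by
  set t := max (max (h (π j)) (τ (π j))) s
  rw [← equilMass_comp_equiv π]
  calc t⁻¹ ≤ s⁻¹ := ENNReal.inv_le_inv.2 (le_max_right _ _)
    _ = ∑ i ∈ Iic j, equilTerm w r (h (π i)) (τ (π i)) s := hs.sum_equilTerm_eq.symm
    _ ≤ ∑ i ∈ Iic j, equilTerm w r (h (π i)) (τ (π i)) t :=
      sum_le_sum fun i _ => equilTerm_monotone _ _ _ _ (le_max_right _ _)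
    _ ≤ equilMass w r (h ∘ π) (τ ∘ π) t :=
      sum_equilTerm_le_equilMass fun i hi => (hπ (mem_Iic.1 hi)).trans (le_max_left _ _)

lemma tstarVal_le_of_inv_le_equilMass {n : ℕ} {w r : ℝ≥0∞} {h τ : Fin n → ℝ≥0∞}
    {π : Equiv.Perm (Fin n)} {s : Fin n → ℝ≥0∞} (hs : ∀ j, SolvesEquil w r h τ π j (s j))
    {t : ℝ≥0∞} (ht : t⁻¹ ≤ equilMass w r h τ t) :
    tstarVal h τ π s ≤ t := by
  rw [← equilMass_comp_equiv π] at ht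
  set J := univ.filter fun i => max (h (π i)) (τ (π i)) ≤ t
  rcases J.eq_empty_or_nonempty with hJ | hJ
  · have hempty : ∀ i, t < max ((h ∘ π) i) ((τ ∘ π) i) := fun i =>
      not_le.1 fun hi => (eq_empty_iff_forall_notMem.1 hJ) i (mem_filter.2 ⟨mem_univ i, hi⟩)
    simp [eq_top_of_inv_le_equilMass ht hempty]
  set j := J.max' hJ
  have hj : max (h (π j)) (τ (π j)) ≤ t := (mem_filter.1 (J.max'_mem hJ)).2
  have hmass : t⁻¹ ≤ ∑ i ∈ Iic j, equilTerm w r (h (π i)) (τ (π i)) t :=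
    ht.trans <| equilMass_le_sum_equilTerm fun i hi =>
      mem_Iic.2 (J.le_max' i (mem_filter.2 ⟨mem_univ i, hi⟩))
  have hsj : s j ≤ t := not_lt.1 fun hlt => hlt.not_ge <| ENNReal.inv_le_inv.1 <|
    calc t⁻¹ ≤ ∑ i ∈ Iic j, equilTerm w r (h (π i)) (τ (π i)) t := hmass
      _ ≤ ∑ i ∈ Iic j, equilTerm w r (h (π i)) (τ (π i)) (s j) :=
        sum_le_sum fun i _ => equilTerm_monotone _ _ _ _ hlt.le
      _ = (s j)⁻¹ := (hs j).sum_equilTerm_eq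
  exact (iInf_le _ j).trans (max_le hj hsj)

theorem equilibrium_time_subset_general (n m : ℕ)
    (w r : ℝ≥0∞) (h τ : Fin n → ℝ≥0∞)
    (k : Fin m → Fin n) (hk : Function.Injective k)
    (π : Equiv.Perm (Fin n))
    (ρ : Equiv.Perm (Fin m)) (hρ : SortsPairs (h ∘ k) (τ ∘ k) ρ)
    (s : Fin n → ℝ≥0∞) (s' : Fin m → ℝ≥0∞)
    (hs : ∀ j, SolvesEquil w r h τ π j (s j))
    (hs' : ∀ j, SolvesEquil w r (h ∘ k) (τ ∘ k) ρ j (s' j)) :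
    tstarVal h τ π s ≤ tstarVal (h ∘ k) (τ ∘ k) ρ s' :=
  le_iInf fun j => tstarVal_le_of_inv_le_equilMass hs <|
    (inv_le_equilMass_of_solvesEquil hρ (hs' j)).trans (equilMass_comp_le_of_injective hk _)

/-- Restricting to a nonempty subset `{k 0, …, k (m-1)}` of the workers
can only increase the equilibrium time. -/
theorem equilibrium_time_subset (n m : ℕ) (hn : 0 < n) (hm : 0 < m)
    (w r : ℝ≥0∞) (h τ : Fin n → ℝ≥0∞)
    (k : Fin m → Fin n) (hk : Function.Injective k)
    (π : Equiv.Perm (Fin n)) (hπ : SortsPairs h τ π)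
    (ρ : Equiv.Perm (Fin m)) (hρ : SortsPairs (h ∘ k) (τ ∘ k) ρ)
    (s : Fin n → ℝ≥0∞) (s' : Fin m → ℝ≥0∞)
    (hs : ∀ j, SolvesEquil w r h τ π j (s j))
    (hs' : ∀ j, SolvesEquil w r (h ∘ k) (τ ∘ k) ρ j (s' j)) :
    tstarVal h τ π s ≤ tstarVal (h ∘ k) (τ ∘ k) ρ s' :=
  equilibrium_time_subset_general n m w r h τ k hk π ρ hρ s s' hs hs'
end

section
/- When all communication times are zero (τ_i = 0 for all i), the equilibrium time satisfies t* ≤ 2 min_{m∈[n]} max{h_{π_m}, (σ²/ε)(Σ_{i=1}^m 1/h_{π_i})^{-1}}, where π sorts the h_i in nondecreasing order. -/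
open Finset
open scoped ENNReal

namespace ENNReal

theorem inv_sum_inv_top_mul {ι : Type*} (S : Finset ι) (f : ι → ℝ≥0∞) :
    (∑ i ∈ S, (∞ * f i)⁻¹)⁻¹ = ∞ * (∑ i ∈ S, (f i)⁻¹)⁻¹ := by
  by_cases hzero : ∃ i ∈ S, f i = 0
  · obtain ⟨i, hi, hfi⟩ := hzero
    have hT : ∑ j ∈ S, (f j)⁻¹ = ∞ := sum_eq_top.mpr ⟨i, hi, by simp [hfi]⟩
    have hT' : ∑ j ∈ S, (∞ * f j)⁻¹ = ∞ := sum_eq_top.mpr ⟨i, hi, by simp [hfi]⟩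
    simp [hT, hT']
  · push Not at hzero
    have hT : ∑ j ∈ S, (f j)⁻¹ ≠ ∞ :=
      (sum_lt_top.mpr fun j hj => inv_lt_top.mpr (pos_iff_ne_zero.mpr (hzero j hj))).ne
    rw [sum_eq_zero fun j hj => by simp [top_mul (hzero j hj)], top_mul (by simpa using hT)]
    simp

/-- Nonemptiness is needed for `c = 0`: the empty sum would give `0⁻¹ = ∞` on the left. -/
theorem inv_sum_inv_const_mul {ι : Type*} {S : Finset ι} (hS : S.Nonempty) (c : ℝ≥0∞)
    (f : ι → ℝ≥0∞) : (∑ i ∈ S, (c * f i)⁻¹)⁻¹ = c * (∑ i ∈ S, (f i)⁻¹)⁻¹ := by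
  rcases eq_or_ne c 0 with rfl | hc0
  · obtain ⟨i, hi⟩ := hS
    rw [sum_eq_top.mpr ⟨i, hi, by simp⟩, inv_top, zero_mul]
  rcases eq_or_ne c ∞ with rfl | hctop
  · exact inv_sum_inv_top_mul S f
  simp_rw [ENNReal.mul_inv (Or.inl hc0) (Or.inl hctop), ← mul_sum]
  rw [ENNReal.mul_inv (Or.inl (ENNReal.inv_ne_zero.mpr hctop)) (Or.inl (inv_ne_top.mpr hc0)),
    inv_inv]

end ENNReal

theorem SolvesEquil.eq_of_communication_zero {n : ℕ} {w r s : ℝ≥0∞} {h : Fin n → ℝ≥0∞}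
    {π : Equiv.Perm (Fin n)} {j : Fin n} (hs : SolvesEquil w r h (fun _ => 0) π j s) :
    s = 2 * (r * (∑ i ∈ Iic j, (h (π i))⁻¹)⁻¹) := by
  have hterm : ∀ i, 2 * h (π i) * r = 2 * r * h (π i) := fun i => by ring
  simp only [SolvesEquil, mul_zero, zero_mul, zero_add, ENNReal.zero_div, hterm] at hs
  rw [← hs, ← mul_assoc, ← ENNReal.inv_sum_inv_const_mul nonempty_Iic]

theorem equilibrium_time_zero_communication_general (n : ℕ)
    (w r : ℝ≥0∞) (h : Fin n → ℝ≥0∞)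
    (π : Equiv.Perm (Fin n))
    (s : Fin n → ℝ≥0∞) (hs : ∀ j, SolvesEquil w r h (fun _ => 0) π j (s j)) :
    tstarVal h (fun _ => 0) π s ≤
      2 * ⨅ m : Fin n,
        max (h (π m)) (r * (∑ i ∈ Finset.Iic m, (h (π i))⁻¹)⁻¹) := by
  rw [ENNReal.mul_iInf_of_ne two_ne_zero ENNReal.ofNat_ne_top]
  refine le_iInf fun m => (iInf_le _ m).trans ?_
  beta_reduce
  rw [max_eq_left zero_le, (hs m).eq_of_communication_zero]
  exact max_le (le_max_left _ _ |>.trans (le_mul_of_one_le_left zero_le one_le_two))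
    (mul_le_mul_right (le_max_right _ _) 2)

/-- Infinitely fast communication: when all `τ_i = 0`, the equilibrium time satisfies
`t* ≤ 2 · min_m max{h_{π m}, (σ²/ε) (∑_{i ≤ m} 1/h_{π i})⁻¹}`, where `π` sorts the `h_i`. -/
theorem equilibrium_time_zero_communication (n : ℕ) (hn : 0 < n)
    (w r : ℝ≥0∞) (h : Fin n → ℝ≥0∞)
    (π : Equiv.Perm (Fin n)) (hπ : SortsPairs h (fun _ => 0) π)
    (s : Fin n → ℝ≥0∞) (hs : ∀ j, SolvesEquil w r h (fun _ => 0) π j (s j)) :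
    tstarVal h (fun _ => 0) π s ≤
      2 * ⨅ m : Fin n,
        max (h (π m)) (r * (∑ i ∈ Finset.Iic m, (h (π i))⁻¹)⁻¹) :=
  equilibrium_time_zero_communication_general n w r h π s hs
end

section
/- Variance bound for the weighted compressed estimator: under unbiased compressors C_{ij} ∈ U(ω_{ij}), unbiased σ²-variance-bounded stochastic gradients, and mutual independence, the estimator g from the previous context satisfies E[‖g - ∇f(x)‖²] ≤ W^{-2}[Σ_i Σ_j w_{ij}² b_{ij}² ω_{ij} ‖∇f(x)‖² + Σ_i (Σ_j w_{ij}² b_{ij} ω_{ij} σ² + Σ_j Σ_p min{b_{ij}, b_{ip}} w_{ij} w_{ip} σ²)], where W = Σ_i Σ_j w_{ij} b_{ij}. -/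
/-!
Writing `S_{ij}` for the minibatch sum `∑_{l < b_{ij}} ξ_{il}`, one has
`g - ∇f(x) = W⁻¹ ∑_{ij} w_{ij} (C_{ij}(S_{ij}) - b_{ij} ∇f(x))`; expand the square.
Integrating out the compressors first (they are unbiased and independent of each other and of
the gradients) turns every cross term into the minibatch covariance
`E⟪S_{ij} - b_{ij}∇f(x), S_{i'j'} - b_{i'j'}∇f(x)⟫`, which is at most `σ²` times the number
of samples the two batches share: `min{b_{ij}, b_{ij'}}` if `i = i'`, none otherwise.
A diagonal term gets in addition the compressor variance
`ω_{ij} E‖S_{ij}‖² = ω_{ij} (b_{ij}² ‖∇f(x)‖² + E‖S_{ij} - b_{ij}∇f(x)‖²)`.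
-/

open MeasureTheory ProbabilityTheory Finset RealInnerProductSpace

section InnerProduct

variable {X : Type*} [MeasurableSpace X] {μ : Measure X}
  {E : Type*} [NormedAddCommGroup E] [InnerProductSpace ℝ E]

lemma MeasureTheory.MemLp.integrable_inner {f h : X → E} (hf : MemLp f 2 μ) (hh : MemLp h 2 μ) :
    Integrable (fun x => ⟪f x, h x⟫) μ :=
  (L2.integrable_inner (𝕜 := ℝ) (hf.toLp f) (hh.toLp h)).congr <| by
    filter_upwards [hf.coeFn_toLp, hh.coeFn_toLp] with x hfx hhx
    rw [hfx, hhx]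

lemma integral_inner_sum_sum {κ : Type*} {Z : κ → X → E} (hZ : ∀ k, MemLp (Z k) 2 μ)
    (s t : Finset κ) :
    ∫ x, ⟪∑ k ∈ s, Z k x, ∑ l ∈ t, Z l x⟫ ∂μ = ∑ k ∈ s, ∑ l ∈ t, ∫ x, ⟪Z k x, Z l x⟫ ∂μ := by
  have hint : ∀ k l, Integrable (fun x => ⟪Z k x, Z l x⟫) μ :=
    fun k l => (hZ k).integrable_inner (hZ l)
  simp_rw [sum_inner, inner_sum]
  rw [integral_finsetSum _ fun k _ => integrable_finsetSum _ fun l _ => hint k l]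
  exact sum_congr rfl fun k _ => integral_finsetSum _ fun l _ => hint k l

lemma integral_inner_sum_sum_of_orthogonal {κ : Type*} [DecidableEq κ] {Z : κ → X → E}
    (hZ : ∀ k, MemLp (Z k) 2 μ) (horth : Pairwise fun k l => ∫ x, ⟪Z k x, Z l x⟫ ∂μ = 0)
    (s t : Finset κ) :
    ∫ x, ⟪∑ k ∈ s, Z k x, ∑ l ∈ t, Z l x⟫ ∂μ = ∑ k ∈ s ∩ t, ∫ x, ‖Z k x‖ ^ 2 ∂μ := by
  have hdiag : ∀ k l, ∫ x, ⟪Z k x, Z l x⟫ ∂μ = if k = l then ∫ x, ‖Z k x‖ ^ 2 ∂μ else 0 := by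
    intro k l
    split_ifs with hkl
    · simp_rw [hkl, real_inner_self_eq_norm_sq]
    · exact horth hkl
  simp_rw [integral_inner_sum_sum hZ, hdiag, sum_ite_eq, sum_ite_mem]

lemma integral_norm_sum_smul_sq {κ : Type*} {Y : κ → X → E} (hY : ∀ k, MemLp (Y k) 2 μ)
    (s : Finset κ) (w : κ → ℝ) :
    ∫ x, ‖∑ k ∈ s, w k • Y k x‖ ^ 2 ∂μ =
      ∑ k ∈ s, ∑ l ∈ s, w k * w l * ∫ x, ⟪Y k x, Y l x⟫ ∂μ := by
  simp_rw [← real_inner_self_eq_norm_sq]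
  rw [integral_inner_sum_sum (Z := fun k x => w k • Y k x) fun k => (hY k).const_smul (w k)]
  simp_rw [real_inner_smul_left, real_inner_smul_right, integral_const_mul, mul_assoc]

lemma integral_norm_sub_sq_eq [CompleteSpace E] [IsProbabilityMeasure μ] {f : X → E}
    (hf : MemLp f 2 μ) (c : E) :
    ∫ x, ‖f x - c‖ ^ 2 ∂μ = ∫ x, ‖f x - ∫ y, f y ∂μ‖ ^ 2 ∂μ + ‖(∫ y, f y ∂μ) - c‖ ^ 2 := by
  set m := ∫ y, f y ∂μ
  have hfm : MemLp (fun x => f x - m) 2 μ := hf.sub (memLp_const m)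
  have hexpand : ∀ x, ‖f x - c‖ ^ 2 = ‖m - c‖ ^ 2 + 2 * ⟪m - c, f x - m⟫ + ‖f x - m‖ ^ 2 := by
    intro x
    rw [← norm_add_sq_real, sub_add_sub_cancel']
  have hcross : ∫ x, ⟪m - c, f x - m⟫ ∂μ = 0 := by
    rw [integral_inner (hfm.integrable one_le_two), integral_sub (hf.integrable one_le_two)
      (integrable_const m), integral_const, probReal_univ, one_smul, sub_self, inner_zero_right]
  have hsq := (memLp_two_iff_integrable_sq_norm hfm.1).1 hfm
  have hlin : Integrable (fun x => 2 * ⟪m - c, f x - m⟫) μ :=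
    ((hfm.integrable one_le_two).const_inner (m - c)).const_mul 2
  simp_rw [hexpand]
  rw [integral_add (f := fun x => ‖m - c‖ ^ 2 + 2 * ⟪m - c, f x - m⟫)
      ((integrable_const _).add hlin) hsq, integral_add (integrable_const _) hlin,
    integral_const_mul, hcross, integral_const, probReal_univ, one_smul, mul_zero, add_zero,
    add_comm]

end InnerProduct

section PiMeasure

variable {ι : Type*} [Fintype ι] {α : ι → Type*} [∀ i, MeasurableSpace (α i)]
  {μ : ∀ i, Measure (α i)} [∀ i, IsProbabilityMeasure (μ i)]
  {E : Type*} [NormedAddCommGroup E] [InnerProductSpace ℝ E] [CompleteSpace E]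

lemma integral_inner_comp_eval_of_ne {a c : ι} (hac : a ≠ c) {f : α a → E} {h : α c → E}
    (hf : Integrable f (μ a)) (hh : Integrable h (μ c)) :
    ∫ ω, ⟪f (ω a), h (ω c)⟫ ∂Measure.pi μ = ⟪∫ x, f x ∂μ a, ∫ x, h x ∂μ c⟫ := by
  have hind : IndepFun (fun ω : ∀ i, α i => ω a) (fun ω => ω c) (Measure.pi μ) :=
    (iIndepFun_pi (X := fun _ => id) fun _ => aemeasurable_id).indepFun hac
  rw [← integral_comp_eval hf.1, ← integral_comp_eval hh.1]
  rw [← (measurePreserving_eval μ a).map_eq] at hf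
  rw [← (measurePreserving_eval μ c).map_eq] at hh
  exact hind.integral_bilin_comp_comp (measurable_pi_apply a).aemeasurable
    (measurable_pi_apply c).aemeasurable hf hh (innerSL ℝ)

end PiMeasure

section IndependentSums

variable {ι : Type*} [Fintype ι] {α : ι → Type*} [∀ i, MeasurableSpace (α i)]
  {μ : ∀ i, Measure (α i)} [∀ i, IsProbabilityMeasure (μ i)]
  {E : Type*} [NormedAddCommGroup E] [InnerProductSpace ℝ E]
  {ξ : ∀ i, α i → E} {c : E}

lemma integral_sum_comp_eval (hξ : ∀ i, Integrable (ξ i) (μ i))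
    (hunb : ∀ i, ∫ x, ξ i x ∂μ i = c) (s : Finset ι) :
    ∫ ω, ∑ k ∈ s, ξ k (ω k) ∂Measure.pi μ = #s • c := by
  rw [integral_finsetSum _ fun k _ => integrable_comp_eval (hξ k)]
  simp_rw [integral_comp_eval (hξ _).1, hunb, sum_const]

lemma integral_inner_sum_comp_eval_sub_le [CompleteSpace E] [DecidableEq ι]
    (hξ : ∀ i, MemLp (ξ i) 2 (μ i)) (hunb : ∀ i, ∫ x, ξ i x ∂μ i = c) {σ2 : ℝ}
    (hvar : ∀ i, ∫ x, ‖ξ i x - c‖ ^ 2 ∂μ i ≤ σ2)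
    (s t : Finset ι) :
    ∫ ω, ⟪∑ k ∈ s, ξ k (ω k) - #s • c, ∑ k ∈ t, ξ k (ω k) - #t • c⟫ ∂Measure.pi μ ≤
      #(s ∩ t) * σ2 := by
  set Z : ι → (∀ i, α i) → E := fun k ω => ξ k (ω k) - c
  have hZ : ∀ k, MemLp (Z k) 2 (Measure.pi μ) := fun k =>
    ((hξ k).sub (memLp_const c)).comp_measurePreserving (measurePreserving_eval μ k)
  have hcentred : ∀ k, Integrable (fun x => ξ k x - c) (μ k) := fun k =>
    ((hξ k).integrable one_le_two).sub (integrable_const c)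
  have horth : Pairwise fun k l => ∫ ω, ⟪Z k ω, Z l ω⟫ ∂Measure.pi μ = 0 := fun k l hkl => by
    change ∫ ω, ⟪ξ k (ω k) - c, ξ l (ω l) - c⟫ ∂Measure.pi μ = 0
    rw [integral_inner_comp_eval_of_ne hkl (hcentred k) (hcentred l),
      integral_sub ((hξ k).integrable one_le_two) (integrable_const c), hunb, integral_const,
      probReal_univ, one_smul, sub_self, inner_zero_left]
  have hsum : ∀ (u : Finset ι) ω, ∑ k ∈ u, ξ k (ω k) - #u • c = ∑ k ∈ u, Z k ω := by
    simp [Z, sum_sub_distrib]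
  simp_rw [hsum, integral_inner_sum_sum_of_orthogonal hZ horth]
  calc ∑ k ∈ s ∩ t, ∫ ω, ‖Z k ω‖ ^ 2 ∂Measure.pi μ ≤ ∑ k ∈ s ∩ t, σ2 := by
        refine sum_le_sum fun k _ => ?_
        rw [integral_comp_eval (f := fun x => ‖ξ k x - c‖ ^ 2)
          ((hcentred k).1.norm.pow 2)]
        exact hvar k
    _ = #(s ∩ t) * σ2 := by rw [sum_const, nsmul_eq_mul]

end IndependentSums

section Compression

variable {κ : Type*} [Fintype κ] {β : κ → Type*} [∀ p, MeasurableSpace (β p)]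
  {ρ : ∀ p, Measure (β p)} [∀ p, IsProbabilityMeasure (ρ p)]
  {X : Type*} [MeasurableSpace X] {ν : Measure X} [IsFiniteMeasure ν]
  {E : Type*} [NormedAddCommGroup E] [MeasurableSpace E] [BorelSpace E]
  [SecondCountableTopology E] {C : ∀ p, E → β p → E}

lemma ae_memLp_of_memLp_prod_pi {p : κ} (hC : Measurable fun z : E × β p => C p z.1 z.2)
    {u : X → E} (hT : MemLp (fun ω : X × (∀ p, β p) => C p (u ω.1) (ω.2 p)) 2
      (ν.prod (Measure.pi ρ))) :
    ∀ᵐ x ∂ν, MemLp (C p (u x)) 2 (ρ p) := by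
  filter_upwards [((memLp_two_iff_integrable_sq_norm hT.1).1 hT).prod_right_ae] with x hx
  have hCx : AEStronglyMeasurable (C p (u x)) (ρ p) :=
    (hC.comp measurable_prodMk_left).aestronglyMeasurable
  exact (memLp_two_iff_integrable_sq_norm hCx).2
    (((measurePreserving_eval ρ p).integrable_comp (hCx.norm.pow 2)).1 hx)

variable [InnerProductSpace ℝ E] [CompleteSpace E]

lemma integral_inner_unbiased_sub_of_ne {p q : κ} (hpq : p ≠ q)
    (hC : ∀ p, Measurable fun z : E × β p => C p z.1 z.2)
    (hunb : ∀ p v, ∫ y, C p v y ∂ρ p = v) {u v : X → E}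
    (hTu : MemLp (fun ω : X × (∀ p, β p) => C p (u ω.1) (ω.2 p)) 2 (ν.prod (Measure.pi ρ)))
    (hTv : MemLp (fun ω : X × (∀ p, β p) => C q (v ω.1) (ω.2 q)) 2 (ν.prod (Measure.pi ρ)))
    (a a' : E) :
    ∫ ω, ⟪C p (u ω.1) (ω.2 p) - a, C q (v ω.1) (ω.2 q) - a'⟫ ∂ν.prod (Measure.pi ρ) =
      ∫ x, ⟪u x - a, v x - a'⟫ ∂ν := by
  rw [integral_prod
    (fun ω : X × (∀ p, β p) => ⟪C p (u ω.1) (ω.2 p) - a, C q (v ω.1) (ω.2 q) - a'⟫)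
    ((hTu.sub (memLp_const a)).integrable_inner (hTv.sub (memLp_const a')))]
  refine integral_congr_ae ?_
  filter_upwards [ae_memLp_of_memLp_prod_pi (hC p) hTu, ae_memLp_of_memLp_prod_pi (hC q) hTv]
    with x hu hv
  have hu' := hu.integrable one_le_two
  have hv' := hv.integrable one_le_two
  rw [integral_inner_comp_eval_of_ne hpq (f := fun y => C p (u x) y - a)
      (h := fun y => C q (v x) y - a') (hu'.sub (integrable_const a))
      (hv'.sub (integrable_const a')), integral_sub hu' (integrable_const a),
    integral_sub hv' (integrable_const a'), hunb, hunb, integral_const, integral_const,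
    probReal_univ, probReal_univ, one_smul, one_smul]

lemma integral_norm_unbiased_sub_sq_le {p : κ} (hC : Measurable fun z : E × β p => C p z.1 z.2)
    (hunb : ∀ v, ∫ y, C p v y ∂ρ p = v) {ϖ : ℝ}
    (hvar : ∀ v, ∫ y, ‖C p v y - v‖ ^ 2 ∂ρ p ≤ ϖ * ‖v‖ ^ 2) {u : X → E} (hu : MemLp u 2 ν)
    (hT : MemLp (fun ω : X × (∀ p, β p) => C p (u ω.1) (ω.2 p)) 2 (ν.prod (Measure.pi ρ)))
    (a : E) :
    ∫ ω, ‖C p (u ω.1) (ω.2 p) - a‖ ^ 2 ∂ν.prod (Measure.pi ρ) ≤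
      ∫ x, ϖ * ‖u x‖ ^ 2 + ‖u x - a‖ ^ 2 ∂ν := by
  have hTa : MemLp (fun ω : X × (∀ p, β p) => C p (u ω.1) (ω.2 p) - a) 2
      (ν.prod (Measure.pi ρ)) := hT.sub (memLp_const a)
  have hsq := (memLp_two_iff_integrable_sq_norm hTa.1).1 hTa
  have hbound : Integrable (fun x => ϖ * ‖u x‖ ^ 2 + ‖u x - a‖ ^ 2) ν :=
    (((memLp_two_iff_integrable_sq_norm hu.1).1 hu).const_mul ϖ).add
      ((memLp_two_iff_integrable_sq_norm (hu.1.sub aestronglyMeasurable_const)).1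
        (hu.sub (memLp_const a)))
  rw [integral_prod _ hsq]
  refine integral_mono_ae hsq.integral_prod_left hbound ?_
  filter_upwards [ae_memLp_of_memLp_prod_pi hC hT] with x hx
  rw [integral_comp_eval (f := fun y => ‖C p (u x) y - a‖ ^ 2)
    ((hx.1.sub aestronglyMeasurable_const).norm.pow 2), integral_norm_sub_sq_eq hx a, hunb]
  exact add_le_add (hvar (u x)) le_rfl

end Compression

section CompressedBatch

variable {ι κ : Type*} [Fintype ι] [DecidableEq ι] [Fintype κ] [DecidableEq κ]
  {α : ι → Type*} [∀ i, MeasurableSpace (α i)]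
  {μ : ∀ i, Measure (α i)} [∀ i, IsProbabilityMeasure (μ i)]
  {β : κ → Type*} [∀ p, MeasurableSpace (β p)]
  {ρ : ∀ p, Measure (β p)} [∀ p, IsProbabilityMeasure (ρ p)]
  {E : Type*} [NormedAddCommGroup E] [InnerProductSpace ℝ E] [CompleteSpace E]
  [MeasurableSpace E] [BorelSpace E] [SecondCountableTopology E]

def compressedBatch (ξ : ∀ i, α i → E) (C : ∀ p, E → β p → E) (s : κ → Finset ι) (p : κ)
    (ω : (∀ i, α i) × (∀ p, β p)) : E :=
  C p (∑ k ∈ s p, ξ k (ω.1 k)) (ω.2 p)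

lemma integral_inner_compressedBatch_sub_le {ξ : ∀ i, α i → E} {c : E} {σ2 : ℝ}
    (hξ : ∀ i, MemLp (ξ i) 2 (μ i)) (hunb : ∀ i, ∫ x, ξ i x ∂μ i = c)
    (hvar : ∀ i, ∫ x, ‖ξ i x - c‖ ^ 2 ∂μ i ≤ σ2)
    {C : ∀ p, E → β p → E} {ϖ : κ → ℝ} (hϖ : ∀ p, 0 ≤ ϖ p)
    (hC : ∀ p, Measurable fun z : E × β p => C p z.1 z.2)
    (hCunb : ∀ p v, ∫ y, C p v y ∂ρ p = v)
    (hCvar : ∀ p v, ∫ y, ‖C p v y - v‖ ^ 2 ∂ρ p ≤ ϖ p * ‖v‖ ^ 2) {s : κ → Finset ι}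
    (hT : ∀ p, MemLp (compressedBatch ξ C s p) 2 ((Measure.pi μ).prod (Measure.pi ρ)))
    (p q : κ) :
    ∫ ω, ⟪compressedBatch ξ C s p ω - #(s p) • c, compressedBatch ξ C s q ω - #(s q) • c⟫
        ∂(Measure.pi μ).prod (Measure.pi ρ) ≤
      #(s p ∩ s q) * σ2 +
        if p = q then ϖ p * ((#(s p) : ℝ) ^ 2 * ‖c‖ ^ 2 + #(s p) * σ2) else 0 := by
  have hcov := integral_inner_sum_comp_eval_sub_le hξ hunb hvar (s p) (s q)
  obtain rfl | hpq := eq_or_ne p q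
  · set S : (∀ i, α i) → E := fun ω => ∑ k ∈ s p, ξ k (ω k)
    have hS : MemLp S 2 (Measure.pi μ) := memLp_finsetSum _ fun k _ =>
      (hξ k).comp_measurePreserving (measurePreserving_eval μ k)
    have hSmean : ∫ ω, S ω ∂Measure.pi μ = #(s p) • c :=
      integral_sum_comp_eval (fun i => (hξ i).integrable one_le_two) hunb (s p)
    set A := ∫ ω, ‖S ω - #(s p) • c‖ ^ 2 ∂Measure.pi μ
    have hSsq : ∫ ω, ‖S ω‖ ^ 2 ∂Measure.pi μ = A + (#(s p) : ℝ) ^ 2 * ‖c‖ ^ 2 := by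
      simpa [hSmean, RCLike.norm_nsmul ℝ, mul_pow, A] using integral_norm_sub_sq_eq hS 0
    have hA : A ≤ #(s p) * σ2 := by simpa [inter_self, A] using hcov
    have hint : Integrable (fun ω => ‖S ω - #(s p) • c‖ ^ 2) (Measure.pi μ) :=
      (memLp_two_iff_integrable_sq_norm (hS.1.sub aestronglyMeasurable_const)).1
        (hS.sub (memLp_const _))
    calc _ ≤ ∫ ω, ϖ p * ‖S ω‖ ^ 2 + ‖S ω - #(s p) • c‖ ^ 2 ∂Measure.pi μ := by
          simp_rw [real_inner_self_eq_norm_sq]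
          exact integral_norm_unbiased_sub_sq_le (hC p) (hCunb p) (hCvar p) hS (hT p) _
      _ = ϖ p * (A + (#(s p) : ℝ) ^ 2 * ‖c‖ ^ 2) + A := by
          rw [integral_add (((memLp_two_iff_integrable_sq_norm hS.1).1 hS).const_mul _) hint,
            integral_const_mul, hSsq]
      _ ≤ _ := by
          have := mul_le_mul_of_nonneg_left hA (hϖ p)
          rw [if_pos rfl, inter_self]
          linarith
  · rw [if_neg hpq, add_zero]
    exact (integral_inner_unbiased_sub_of_ne hpq hC hCunb (hT p) (hT q) _ _).trans_le hcov

end CompressedBatch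

lemma inv_smul_sum_smul_sub_eq {E κ : Type*} [AddCommGroup E] [Module ℝ E] (s : Finset κ)
    (w : κ → ℝ) (N : κ → ℕ) (y : κ → E) (c : E) {W : ℝ} (hW : W = ∑ p ∈ s, w p * N p)
    (hW0 : W ≠ 0) :
    W⁻¹ • ∑ p ∈ s, w p • y p - c = W⁻¹ • ∑ p ∈ s, w p • (y p - N p • c) := by
  simp_rw [smul_sub, sum_sub_distrib, ← Nat.cast_smul_eq_nsmul ℝ, smul_smul, ← sum_smul, ← hW,
    smul_sub, inv_smul_smul₀ hW0]

lemma sum_sum_sigma_ite_fst_eq {ι R : Type*} [Fintype ι] [DecidableEq ι] {m : ι → Type*}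
    [∀ i, Fintype (m i)] [AddCommMonoid R] (f : (Σ i, m i) → (Σ i, m i) → R) :
    ∑ p, ∑ q, (if p.1 = q.1 then f p q else 0) = ∑ i, ∑ j, ∑ j', f ⟨i, j⟩ ⟨i, j'⟩ := by
  simp only [Fintype.sum_sigma]
  refine sum_congr rfl fun i _ => sum_congr rfl fun j _ => ?_
  rw [Fintype.sum_eq_single i fun i' hi' => by simp [Ne.symm hi']]
  simp

section Minibatches

variable {n B : ℕ} {m : Fin n → ℕ} {b : (i : Fin n) → Fin (m i) → ℕ}

variable (B b) in
def minibatch (p : Σ i, Fin (m i)) : Finset (Fin n × Fin B) :=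
  (univ.filter fun l : Fin B => (l : ℕ) < b p.1 p.2).map (Function.Embedding.sectR p.1 (Fin B))

lemma card_minibatch {p : Σ i, Fin (m i)} (hb : b p.1 p.2 ≤ B) :
    #(minibatch B b p) = b p.1 p.2 := by
  simp [minibatch, Fin.card_filter_val_lt, hb]

lemma card_minibatch_inter (hbB : ∀ i j, b i j ≤ B) (p q : Σ i, Fin (m i)) :
    #(minibatch B b p ∩ minibatch B b q) =
      if p.1 = q.1 then min (b p.1 p.2) (b q.1 q.2) else 0 := by
  obtain ⟨i, j⟩ := p
  obtain ⟨i', j'⟩ := q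
  dsimp only
  split_ifs with hii
  · subst hii
    rw [minibatch, minibatch, ← map_inter, card_map, ← filter_and]
    simp_rw [← lt_min_iff]
    rw [Fin.card_filter_val_lt, min_eq_right ((min_le_left _ _).trans (hbB i j))]
  · rw [card_eq_zero, ← disjoint_iff_inter_eq_empty, disjoint_left]
    simp [minibatch, Ne.symm hii]

lemma sum_weight_mul_minibatch_bound_eq (hbB : ∀ i j, b i j ≤ B)
    (w ϖ : (i : Fin n) → Fin (m i) → ℝ) (σ2 G : ℝ) :
    ∑ p, ∑ q, w p.1 p.2 * w q.1 q.2 *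
        ((#(minibatch B b p ∩ minibatch B b q) : ℝ) * σ2 + if p = q then
          ϖ p.1 p.2 * ((#(minibatch B b p) : ℝ) ^ 2 * G + #(minibatch B b p) * σ2) else 0) =
      (∑ i, ∑ j, (w i j) ^ 2 * (b i j : ℝ) ^ 2 * ϖ i j * G) +
        ∑ i, ((∑ j, (w i j) ^ 2 * (b i j : ℝ) * ϖ i j * σ2) +
          ∑ j, ∑ p, (min (b i j) (b i p) : ℝ) * w i j * w i p * σ2) := by
  simp_rw [card_minibatch_inter hbB, card_minibatch (hbB _ _), Nat.cast_ite, Nat.cast_zero,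
    ite_mul, zero_mul, mul_add, mul_ite, mul_zero, sum_add_distrib, sum_sum_sigma_ite_fst_eq,
    sum_ite_eq, mem_univ, if_true, Fintype.sum_sigma]
  simp only [Nat.cast_min, mul_add, sum_add_distrib, ← sq]
  ac_rfl

end Minibatches

theorem shadowheart_estimator_variance_bound_general
    (n d B : ℕ) (m : Fin n → ℕ) (b : (i : Fin n) → Fin (m i) → ℕ)
    (hbB : ∀ i j, b i j ≤ B)
    (w : (i : Fin n) → Fin (m i) → ℝ) (hw : ∀ i j, 0 ≤ w i j)
    (W : ℝ) (hW : W = ∑ i, ∑ j, w i j * (b i j : ℝ)) (hWpos : 0 < W)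
    (ωv : (i : Fin n) → Fin (m i) → ℝ) (hωv : ∀ i j, 0 ≤ ωv i j)
    (σ2 : ℝ)
    (Ωg : Fin n × Fin B → Type) [∀ q, MeasurableSpace (Ωg q)]
    (μg : ∀ q, Measure (Ωg q)) [∀ q, IsProbabilityMeasure (μg q)]
    (Ωc : (Σ i : Fin n, Fin (m i)) → Type) [∀ p, MeasurableSpace (Ωc p)]
    (μc : ∀ p, Measure (Ωc p)) [∀ p, IsProbabilityMeasure (μc p)]
    (gx : EuclideanSpace ℝ (Fin d))
    (ξ : (i : Fin n) → (l : Fin B) → Ωg (i, l) → EuclideanSpace ℝ (Fin d))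
    (hξmem : ∀ i l, MemLp (ξ i l) 2 (μg (i, l)))
    (hξunb : ∀ i l, ∫ ω, ξ i l ω ∂(μg (i, l)) = gx)
    (hξvar : ∀ i l, ∫ ω, ‖ξ i l ω - gx‖ ^ 2 ∂(μg (i, l)) ≤ σ2)
    (C : (i : Fin n) → (j : Fin (m i)) →
      EuclideanSpace ℝ (Fin d) → Ωc ⟨i, j⟩ → EuclideanSpace ℝ (Fin d))
    (hCmeas : ∀ i j, Measurable
      fun p : EuclideanSpace ℝ (Fin d) × Ωc ⟨i, j⟩ => C i j p.1 p.2)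
    (hCunb : ∀ i j v, ∫ ω, C i j v ω ∂(μc ⟨i, j⟩) = v)
    (hCvar : ∀ i j v, ∫ ω, ‖C i j v ω - v‖ ^ 2 ∂(μc ⟨i, j⟩) ≤ ωv i j * ‖v‖ ^ 2)
    (g : ((∀ q, Ωg q) × (∀ p, Ωc p)) → EuclideanSpace ℝ (Fin d))
    (hg : g = fun ω => W⁻¹ •
      ∑ i, ∑ j, w i j • C i j
        (∑ l ∈ Finset.univ.filter (fun l : Fin B => (l : ℕ) < b i j), ξ i l (ω.1 (i, l)))
        (ω.2 ⟨i, j⟩))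
    (hterm : ∀ i j, MemLp
      (fun ω : (∀ q, Ωg q) × (∀ p, Ωc p) => C i j
        (∑ l ∈ Finset.univ.filter (fun l : Fin B => (l : ℕ) < b i j), ξ i l (ω.1 (i, l)))
        (ω.2 ⟨i, j⟩))
      2 ((Measure.pi μg).prod (Measure.pi μc))) :
    ∫ ω, ‖g ω - gx‖ ^ 2 ∂((Measure.pi μg).prod (Measure.pi μc)) ≤
      (W ^ 2)⁻¹ *
        ((∑ i, ∑ j, (w i j) ^ 2 * (b i j : ℝ) ^ 2 * ωv i j * ‖gx‖ ^ 2) +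
          ∑ i, ((∑ j, (w i j) ^ 2 * (b i j : ℝ) * ωv i j * σ2) +
            ∑ j, ∑ p, (min (b i j) (b i p) : ℝ) * w i j * w i p * σ2)) := by
  set s : (Σ i, Fin (m i)) → Finset (Fin n × Fin B) := minibatch B b
  set T := compressedBatch (fun k : Fin n × Fin B => ξ k.1 k.2)
    (fun p : Σ i, Fin (m i) => C p.1 p.2) s
  have hT_def : ∀ i j ω, C i j (∑ l ∈ univ.filter (fun l : Fin B => (l : ℕ) < b i j),
      ξ i l (ω.1 (i, l))) (ω.2 ⟨i, j⟩) = T ⟨i, j⟩ ω := fun i j ω => by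
    simp only [T, compressedBatch, s, minibatch, sum_map]
    rfl
  have hT : ∀ p, MemLp (T p) 2 ((Measure.pi μg).prod (Measure.pi μc)) := fun p => by
    simpa only [hT_def] using hterm p.1 p.2
  have hcard : ∀ p, #(s p) = b p.1 p.2 := fun p => card_minibatch (hbB p.1 p.2)
  have hW_sigma : W = ∑ p, w p.1 p.2 * #(s p) := by simp [hW, hcard, Fintype.sum_sigma]
  have hdev : ∀ ω, g ω - gx = W⁻¹ • ∑ p, w p.1 p.2 • (T p ω - #(s p) • gx) := fun ω => by
    rw [← inv_smul_sum_smul_sub_eq _ _ _ _ _ hW_sigma hWpos.ne', hg]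
    simp [hT_def, Fintype.sum_sigma]
  simp_rw [hdev, norm_smul, mul_pow, norm_inv, inv_pow, Real.norm_eq_abs, sq_abs]
  rw [integral_const_mul, integral_norm_sum_smul_sq (Y := fun p ω => T p ω - #(s p) • gx)
      fun p => (hT p).sub (memLp_const _),
    ← sum_weight_mul_minibatch_bound_eq hbB w ωv σ2 (‖gx‖ ^ 2)]
  gcongr with p _ q _
  · exact mul_nonneg (hw _ _) (hw _ _)
  · exact integral_inner_compressedBatch_sub_le (fun k => hξmem k.1 k.2) (fun k => hξunb k.1 k.2)
      (fun k => hξvar k.1 k.2) (fun p => hωv p.1 p.2) (fun p => hCmeas p.1 p.2)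
      (fun p => hCunb p.1 p.2) (fun p => hCvar p.1 p.2) hT p q

/-- Variance bound for the weighted compressed minibatch estimator
`g = W⁻¹ ∑_i ∑_j w_{ij} C_{ij}(∑_{l < b_{ij}} ξ_{il})`, with unbiased compressors
`C_{ij} ∈ 𝕌(ω_{ij})`, unbiased `σ²`-variance-bounded stochastic gradients `ξ_{il}`,
ordered batch sizes `b_{i1} ≤ … ≤ b_{i,m_i}`, and all randomness mutually independent
(modelled on a product probability space):
`E‖g - ∇f(x)‖² ≤ W⁻²[∑_i ∑_j w_{ij}² b_{ij}² ω_{ij} ‖∇f(x)‖²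
  + ∑_i (∑_j w_{ij}² b_{ij} ω_{ij} σ² + ∑_j ∑_p min{b_{ij}, b_{ip}} w_{ij} w_{ip} σ²)]`. -/
theorem shadowheart_estimator_variance_bound
    (n d B : ℕ) (m : Fin n → ℕ) (b : (i : Fin n) → Fin (m i) → ℕ)
    (hbB : ∀ i j, b i j ≤ B)
    (hbmono : ∀ i, Monotone fun j : Fin (m i) => b i j)
    (w : (i : Fin n) → Fin (m i) → ℝ) (hw : ∀ i j, 0 ≤ w i j)
    (W : ℝ) (hW : W = ∑ i, ∑ j, w i j * (b i j : ℝ)) (hWpos : 0 < W)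
    (ωv : (i : Fin n) → Fin (m i) → ℝ) (hωv : ∀ i j, 0 ≤ ωv i j)
    (σ2 : ℝ) (hσ2 : 0 ≤ σ2)
    (Ωg : Fin n × Fin B → Type) [∀ q, MeasurableSpace (Ωg q)]
    (μg : ∀ q, Measure (Ωg q)) [∀ q, IsProbabilityMeasure (μg q)]
    (Ωc : (Σ i : Fin n, Fin (m i)) → Type) [∀ p, MeasurableSpace (Ωc p)]
    (μc : ∀ p, Measure (Ωc p)) [∀ p, IsProbabilityMeasure (μc p)]
    (gx : EuclideanSpace ℝ (Fin d))
    (ξ : (i : Fin n) → (l : Fin B) → Ωg (i, l) → EuclideanSpace ℝ (Fin d))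
    (hξmeas : ∀ i l, Measurable (ξ i l))
    (hξmem : ∀ i l, MemLp (ξ i l) 2 (μg (i, l)))
    (hξunb : ∀ i l, ∫ ω, ξ i l ω ∂(μg (i, l)) = gx)
    (hξvar : ∀ i l, ∫ ω, ‖ξ i l ω - gx‖ ^ 2 ∂(μg (i, l)) ≤ σ2)
    (C : (i : Fin n) → (j : Fin (m i)) →
      EuclideanSpace ℝ (Fin d) → Ωc ⟨i, j⟩ → EuclideanSpace ℝ (Fin d))
    (hCmeas : ∀ i j, Measurable
      fun p : EuclideanSpace ℝ (Fin d) × Ωc ⟨i, j⟩ => C i j p.1 p.2)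
    (hCunb : ∀ i j v, ∫ ω, C i j v ω ∂(μc ⟨i, j⟩) = v)
    (hCvar : ∀ i j v, ∫ ω, ‖C i j v ω - v‖ ^ 2 ∂(μc ⟨i, j⟩) ≤ ωv i j * ‖v‖ ^ 2)
    (g : ((∀ q, Ωg q) × (∀ p, Ωc p)) → EuclideanSpace ℝ (Fin d))
    (hg : g = fun ω => W⁻¹ •
      ∑ i, ∑ j, w i j • C i j
        (∑ l ∈ Finset.univ.filter (fun l : Fin B => (l : ℕ) < b i j), ξ i l (ω.1 (i, l)))
        (ω.2 ⟨i, j⟩))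
    (hterm : ∀ i j, MemLp
      (fun ω : (∀ q, Ωg q) × (∀ p, Ωc p) => C i j
        (∑ l ∈ Finset.univ.filter (fun l : Fin B => (l : ℕ) < b i j), ξ i l (ω.1 (i, l)))
        (ω.2 ⟨i, j⟩))
      2 ((Measure.pi μg).prod (Measure.pi μc))) :
    ∫ ω, ‖g ω - gx‖ ^ 2 ∂((Measure.pi μg).prod (Measure.pi μc)) ≤
      (W ^ 2)⁻¹ *
        ((∑ i, ∑ j, (w i j) ^ 2 * (b i j : ℝ) ^ 2 * ωv i j * ‖gx‖ ^ 2) +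
          ∑ i, ((∑ j, (w i j) ^ 2 * (b i j : ℝ) * ωv i j * σ2) +
            ∑ j, ∑ p, (min (b i j) (b i p) : ℝ) * w i j * w i p * σ2)) :=
  shadowheart_estimator_variance_bound_general n d B m b hbB w hw W hW hWpos ωv hωv σ2 Ωg μg Ωc μc
    gx ξ hξmem hξunb hξvar C hCmeas hCunb hCvar g hg hterm
end

section
/- If for each worker m ∈ [n], η_m and μ_m are independent random variables such that P(h_m η_m ≤ t) ≤ 1 - (1-p_σ)^{⌊t/h_m⌋} and P(τ_m μ_m ≤ t) ≤ 1 - (1-p_ω)^{⌊t/τ_m⌋}, and all 2n variables are mutually independent, then P(min_m {h_m η_m + τ_m μ_m} ≤ t) ≤ 1 - Π_{m=1}^n (1 - (1-(1-p_ω)^{⌊t/τ_m⌋})(1-(1-p_σ)^{⌊t/h_m⌋})). -/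
open MeasureTheory ProbabilityTheory
open scoped ENNReal

/-!
Worker `m` finishes by time `t` only if both of its stages do, i.e. only if the event
`Aₘ = {hₘ ηₘ ≤ t} ∩ {τₘ μₘ ≤ t}` occurs. Independence of the `2n` variables makes the `Aₘ`
independent events with `P(Aₘ) = P(hₘ ηₘ ≤ t) P(τₘ μₘ ≤ t)`, so the probability that some `Aₘ`
occurs is `1 - ∏ₘ (1 - P(Aₘ))`, which is monotone in each `P(Aₘ)`; inserting the two tail
bounds gives the claim.
-/

lemma ENNReal.exists_le_and_le_of_iInf_add_le {ι : Type*} [Finite ι] {f g : ι → ℝ≥0∞}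
    {a : ℝ≥0∞} (ha : a ≠ ∞) (h : ⨅ i, (f i + g i) ≤ a) : ∃ i, f i ≤ a ∧ g i ≤ a := by
  cases isEmpty_or_nonempty ι
  · simp only [iInf_of_empty, top_le_iff] at h
    exact absurd h ha
  · obtain ⟨i, hi⟩ := Finite.exists_min fun i => f i + g i
    have hle : f i + g i ≤ a := (le_iInf hi).trans h
    exact ⟨i, le_self_add.trans hle, le_add_self.trans hle⟩

lemma one_sub_one_sub_pow_mem_Icc {p : ℝ} (hp : p ∈ Set.Icc (0 : ℝ) 1) (k : ℕ) :
    1 - (1 - p) ^ k ∈ Set.Icc (0 : ℝ) 1 := by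
  have h0 : 0 ≤ 1 - p := by linarith [hp.2]
  have h1 : 1 - p ≤ 1 := by linarith [hp.1]
  constructor <;> linarith [pow_le_one₀ h0 h1 (n := k), pow_nonneg h0 k]

lemma ENNReal.ofReal_one_sub_prod_one_sub {ι : Type*} {s : Finset ι} {x : ι → ℝ}
    (hx : ∀ i ∈ s, x i ∈ Set.Icc (0 : ℝ) 1) :
    ENNReal.ofReal (1 - ∏ i ∈ s, (1 - x i)) = 1 - ∏ i ∈ s, (1 - ENNReal.ofReal (x i)) := by
  have hx' : ∀ i ∈ s, 0 ≤ 1 - x i := fun i hi => sub_nonneg.2 (hx i hi).2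
  rw [ENNReal.ofReal_sub _ (Finset.prod_nonneg hx'), ENNReal.ofReal_one,
    ENNReal.ofReal_prod_of_nonneg hx']
  congr 1
  refine Finset.prod_congr rfl fun i hi => ?_
  rw [ENNReal.ofReal_sub _ (hx i hi).1, ENNReal.ofReal_one]

namespace ProbabilityTheory

variable {Ω ι β : Type*} [MeasurableSpace Ω] [MeasurableSpace β] {μ : Measure Ω}

lemma iIndepSet.measure_iUnion_eq_one_sub_prod [Fintype ι] {s : ι → Set Ω}
    (h : iIndepSet s μ) (hs : ∀ i, MeasurableSet (s i)) :
    μ (⋃ i, s i) = 1 - ∏ i, (1 - μ (s i)) := by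
  have := h.isProbabilityMeasure
  have hcompl : μ (⋂ i, (s i)ᶜ) = ∏ i, μ (s i)ᶜ :=
    iIndep.meas_iInter h fun i =>
      (MeasurableSpace.measurableSet_generateFrom (Set.mem_singleton _)).compl
  rw [← compl_compl (⋃ i, s i), prob_compl_eq_one_sub (MeasurableSet.iUnion hs).compl,
    Set.compl_iUnion, hcompl]
  simp only [prob_compl_eq_one_sub (hs _)]

variable {X Y : ι → Ω → β} {A B : ι → Set β}

lemma iIndepFun.measure_biInter_inter_preimage_sumElim
    (h : iIndepFun (Sum.elim X Y) μ) (hA : ∀ i, MeasurableSet (A i))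
    (hB : ∀ i, MeasurableSet (B i)) (s : Finset ι) :
    μ (⋂ i ∈ s, (X i ⁻¹' A i ∩ Y i ⁻¹' B i)) =
      ∏ i ∈ s, μ (X i ⁻¹' A i) * μ (Y i ⁻¹' B i) := by
  have hinter : ⋂ i ∈ s, (X i ⁻¹' A i ∩ Y i ⁻¹' B i) =
      ⋂ j ∈ s.disjSum s, Sum.elim (fun i => X i ⁻¹' A i) (fun i => Y i ⁻¹' B i) j := by
    ext ω
    simp [Finset.mem_disjSum, or_imp, forall_and]
  rw [hinter, h.meas_biInter, Finset.prod_disjSum, ← Finset.prod_mul_distrib]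
  · rfl
  rintro (i | i) -
  exacts [⟨A i, hA i, rfl⟩, ⟨B i, hB i, rfl⟩]

lemma iIndepFun.iIndepSet_inter_preimage_sumElim
    (h : iIndepFun (Sum.elim X Y) μ) (hX : ∀ i, Measurable (X i)) (hY : ∀ i, Measurable (Y i))
    (hA : ∀ i, MeasurableSet (A i)) (hB : ∀ i, MeasurableSet (B i)) :
    iIndepSet (fun i => X i ⁻¹' A i ∩ Y i ⁻¹' B i) μ := by
  refine (iIndepSet_iff_meas_biInter fun i => (hX i (hA i)).inter (hY i (hB i))).2 fun s => ?_
  rw [h.measure_biInter_inter_preimage_sumElim hA hB]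
  refine Finset.prod_congr rfl fun i _ => ?_
  simpa using (h.measure_biInter_inter_preimage_sumElim hA hB {i}).symm

end ProbabilityTheory

theorem min_worker_time_probability_bound_general
    {Ω : Type*} [MeasurableSpace Ω] (μ : Measure Ω) [IsProbabilityMeasure μ]
    (n : ℕ) (h τ : Fin n → ℝ)
    (pσ pω : ℝ) (hpσ : pσ ∈ Set.Ioc (0 : ℝ) 1) (hpω : pω ∈ Set.Ioc (0 : ℝ) 1)
    (t : ℝ)
    (η μv : Fin n → Ω → ℝ≥0∞)
    (hηmeas : ∀ m, Measurable (η m)) (hμvmeas : ∀ m, Measurable (μv m))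
    (hindep : iIndepFun (β := fun _ : Fin n ⊕ Fin n => ℝ≥0∞)
      (Sum.elim η μv) μ)
    (hηtail : ∀ m, μ {ω | ENNReal.ofReal (h m) * η m ω ≤ ENNReal.ofReal t} ≤
      ENNReal.ofReal (1 - (1 - pσ) ^ Nat.floor (t / h m)))
    (hμtail : ∀ m, μ {ω | ENNReal.ofReal (τ m) * μv m ω ≤ ENNReal.ofReal t} ≤
      ENNReal.ofReal (1 - (1 - pω) ^ Nat.floor (t / τ m))) :
    μ {ω | (⨅ m, (ENNReal.ofReal (h m) * η m ω + ENNReal.ofReal (τ m) * μv m ω)) ≤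
        ENNReal.ofReal t} ≤
      ENNReal.ofReal (1 - ∏ m, (1 - (1 - (1 - pω) ^ Nat.floor (t / τ m)) *
        (1 - (1 - pσ) ^ Nat.floor (t / h m)))) := by
  set A : Fin n → Set ℝ≥0∞ := fun m => {x | ENNReal.ofReal (h m) * x ≤ ENNReal.ofReal t}
  set B : Fin n → Set ℝ≥0∞ := fun m => {x | ENNReal.ofReal (τ m) * x ≤ ENNReal.ofReal t}
  have hA : ∀ m, MeasurableSet (A m) := fun m => measurableSet_le (by fun_prop) (by fun_prop)
  have hB : ∀ m, MeasurableSet (B m) := fun m => measurableSet_le (by fun_prop) (by fun_prop)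
  have hσ : ∀ k : ℕ, 1 - (1 - pσ) ^ k ∈ Set.Icc (0 : ℝ) 1 :=
    one_sub_one_sub_pow_mem_Icc (Set.Ioc_subset_Icc_self hpσ)
  have hω : ∀ k : ℕ, 1 - (1 - pω) ^ k ∈ Set.Icc (0 : ℝ) 1 :=
    one_sub_one_sub_pow_mem_Icc (Set.Ioc_subset_Icc_self hpω)
  have hevent : {ω | (⨅ m, (ENNReal.ofReal (h m) * η m ω + ENNReal.ofReal (τ m) * μv m ω)) ≤
      ENNReal.ofReal t} ⊆ ⋃ m, (η m ⁻¹' A m ∩ μv m ⁻¹' B m) := fun ω hmin =>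
    Set.mem_iUnion.2 (ENNReal.exists_le_and_le_of_iInf_add_le ENNReal.ofReal_ne_top hmin)
  have hworker : ∀ m, μ (η m ⁻¹' A m ∩ μv m ⁻¹' B m) ≤ ENNReal.ofReal
      ((1 - (1 - pω) ^ Nat.floor (t / τ m)) * (1 - (1 - pσ) ^ Nat.floor (t / h m))) := by
    intro m
    have hpair : IndepFun (η m) (μv m) μ := hindep.indepFun Sum.inl_ne_inr
    rw [hpair.measure_inter_preimage_eq_mul _ _ (hA m) (hB m), mul_comm,
      ENNReal.ofReal_mul (hω _).1]
    exact mul_le_mul' (hμtail m) (hηtail m)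
  calc _ ≤ μ (⋃ m, (η m ⁻¹' A m ∩ μv m ⁻¹' B m)) := measure_mono hevent
    _ = 1 - ∏ m, (1 - μ (η m ⁻¹' A m ∩ μv m ⁻¹' B m)) :=
      (hindep.iIndepSet_inter_preimage_sumElim hηmeas hμvmeas hA hB).measure_iUnion_eq_one_sub_prod
        fun m => (hηmeas m (hA m)).inter (hμvmeas m (hB m))
    _ ≤ 1 - ∏ m, (1 - ENNReal.ofReal
        ((1 - (1 - pω) ^ Nat.floor (t / τ m)) * (1 - (1 - pσ) ^ Nat.floor (t / h m)))) := by
      gcongr with m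
      exact hworker m
    _ = _ := (ENNReal.ofReal_one_sub_prod_one_sub fun m _ =>
      unitInterval.mul_mem (hω _) (hσ _)).symm

/-- If for each worker `m` the (extended-natural-valued) random variables `η m` and `μv m`
satisfy `P(h_m η_m ≤ t) ≤ 1 - (1-p_σ)^⌊t/h_m⌋` and `P(τ_m μ_m ≤ t) ≤ 1 - (1-p_ω)^⌊t/τ_m⌋`,
and all `2n` variables are mutually independent, then
`P(min_m {h_m η_m + τ_m μ_m} ≤ t)
  ≤ 1 - ∏_m (1 - (1-(1-p_ω)^⌊t/τ_m⌋)(1-(1-p_σ)^⌊t/h_m⌋))`. -/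
theorem min_worker_time_probability_bound
    {Ω : Type*} [MeasurableSpace Ω] (μ : Measure Ω) [IsProbabilityMeasure μ]
    (n : ℕ) (hn : 0 < n) (h τ : Fin n → ℝ)
    (hh : ∀ m, 0 < h m) (hτ : ∀ m, 0 < τ m)
    (pσ pω : ℝ) (hpσ : pσ ∈ Set.Ioc (0 : ℝ) 1) (hpω : pω ∈ Set.Ioc (0 : ℝ) 1)
    (t : ℝ) (ht : 0 ≤ t)
    (η μv : Fin n → Ω → ℝ≥0∞)
    (hηmeas : ∀ m, Measurable (η m)) (hμvmeas : ∀ m, Measurable (μv m))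
    (hindep : iIndepFun (β := fun _ : Fin n ⊕ Fin n => ℝ≥0∞)
      (Sum.elim η μv) μ)
    (hηtail : ∀ m, μ {ω | ENNReal.ofReal (h m) * η m ω ≤ ENNReal.ofReal t} ≤
      ENNReal.ofReal (1 - (1 - pσ) ^ Nat.floor (t / h m)))
    (hμtail : ∀ m, μ {ω | ENNReal.ofReal (τ m) * μv m ω ≤ ENNReal.ofReal t} ≤
      ENNReal.ofReal (1 - (1 - pω) ^ Nat.floor (t / τ m))) :
    μ {ω | (⨅ m, (ENNReal.ofReal (h m) * η m ω + ENNReal.ofReal (τ m) * μv m ω)) ≤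
        ENNReal.ofReal t} ≤
      ENNReal.ofReal (1 - ∏ m, (1 - (1 - (1 - pω) ^ Nat.floor (t / τ m)) *
        (1 - (1 - pσ) ^ Nat.floor (t / h m)))) :=
  min_worker_time_probability_bound_general μ n h τ pσ pω hpσ hpω t η μv hηmeas hμvmeas hindep
    hηtail hμtail
end
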